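/- For each m ≥ 1, the following identity of formal power series in q holds: (1/(q;q)_∞) * Σ_{l=0}^{m-1} (-1)^l q^{l(3l+1)/2} (1 - q^{2l+1}) = 1 + (-1)^{m-1} Σ_{d=1}^∞ q^{d²+d+binomial(m,2)} / (q;q)_{2d} * (1-q^m)/(1-q^d) * qbinom(2d, d+m). -/

import Mathlib

open Finset

/-- `(q;q)_n = ∏_{i=1}^n (1 - q^i)` as a formal power series over `ℚ`. -/
noncomputable def qp (n : ℕ) : PowerSeries ℚ :=
  ∏ i ∈ Finset.range n, (1 - (PowerSeries.X : PowerSeries ℚ) ^ (i + 1))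

/-- The Gaussian binomial coefficient `qbinom(n,k)`. -/
noncomputable def qbin (n k : ℕ) : PowerSeries ℚ :=
  if k ≤ n then qp n * (qp k * qp (n - k))⁻¹ else 0

/-- `(q;q)_∞ = ∏_{i=1}^∞ (1 - q^i)`, defined coefficientwise: its `n`-th coefficient
agrees with that of `(q;q)_n`, since the omitted factors are `1 + O(q^{n+1})`. -/
noncomputable def qpInf : PowerSeries ℚ :=
  PowerSeries.mk fun n => PowerSeries.coeff n (qp n)

/-- The sum `Σ_{d=0}^∞ f d` of a sequence of power series in which the order of
`f d` tends to infinity (indeed `f d = O(q^d)` in our applications), defined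
coefficientwise via truncation. -/
noncomputable def seriesSum (f : ℕ → PowerSeries ℚ) : PowerSeries ℚ :=
  PowerSeries.mk fun n => PowerSeries.coeff n (∑ d ∈ Finset.range (n + 1), f d)

/-!
Write `T m D` for the `D`-th summand on the right; it vanishes for `D < m`. For `D = e + m`
two consecutive summands combine to
`T m D + T (m+1) D = q^{m(3m+1)/2} (1 - q^{2m+1}) · q^{e(e+2m+1)} / ((q;q)_e (q;q)_{e+2m+1})`,
so by the Durfee rectangle identity `1/(q;q)_∞ = Σ_e q^{e(e+r)} / ((q;q)_e (q;q)_{e+r})` with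
`r = 2m+1`, summing over `D` gives `q^{m(3m+1)/2} (1 - q^{2m+1}) / (q;q)_∞`, which is `(-1)^m`
times the new term on the left. This is the induction step from `m` to `m+1`; the case `m = 1` is
the Durfee identity with `r = 1`. The Durfee identity in turn is q-Vandermonde for
`qbinom(2n+r, n)`, a series that agrees with `1/(q;q)_∞` up to degree `n`.
-/

open PowerSeries

-- Identities between quotients of power series are checked in the field of Laurent series,
-- where `field_simp` applies.
local notation "ι" => HahnSeries.ofPowerSeries ℤ ℚ

theorem qp_zero : qp 0 = 1 := prod_range_zero _

theorem qp_succ (n : ℕ) : qp (n + 1) = qp n * (1 - X ^ (n + 1)) := prod_range_succ _ _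

theorem qp_one : qp 1 = 1 - X := by
  rw [← zero_add 1, qp_succ, qp_zero, one_mul, zero_add, pow_one]

theorem qp_add (k l : ℕ) : qp (k + l) = qp k * ∏ i ∈ range l, (1 - X ^ (k + i + 1)) := by
  simp only [qp, prod_range_add, add_assoc]

theorem constantCoeff_qp (n : ℕ) : constantCoeff (qp n) = 1 := by
  simp [qp, map_prod]

theorem HahnSeries.ofPowerSeries_inv {K : Type*} [Field K] {f : K⟦X⟧}
    (h : constantCoeff f ≠ 0) : ofPowerSeries ℤ K f⁻¹ = (ofPowerSeries ℤ K f)⁻¹ :=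
  eq_inv_of_mul_eq_one_left (by rw [← map_mul, PowerSeries.inv_mul_cancel _ h, map_one])

theorem HahnSeries.ofPowerSeries_ne_zero {K : Type*} [Field K] {f : K⟦X⟧}
    (h : constantCoeff f ≠ 0) : ofPowerSeries ℤ K f ≠ 0 :=
  (map_ne_zero_iff _ ofPowerSeries_injective).mpr fun hf => h (by rw [hf, map_zero])

theorem ofPowerSeries_qp_inv (n : ℕ) : ι (qp n)⁻¹ = (ι (qp n))⁻¹ :=
  HahnSeries.ofPowerSeries_inv (by simp [constantCoeff_qp])

theorem ofPowerSeries_qp_ne_zero (n : ℕ) : ι (qp n) ≠ 0 :=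
  HahnSeries.ofPowerSeries_ne_zero (by simp [constantCoeff_qp])

theorem ofPowerSeries_one_sub_X_pow_inv {n : ℕ} (hn : n ≠ 0) :
    ι (1 - X ^ n)⁻¹ = (1 - ι X ^ n)⁻¹ := by
  rw [HahnSeries.ofPowerSeries_inv (by simp [hn]), map_sub, map_one, map_pow]

theorem one_sub_ofPowerSeries_X_pow_ne_zero {n : ℕ} (hn : n ≠ 0) : 1 - ι X ^ n ≠ 0 := by
  have h := HahnSeries.ofPowerSeries_ne_zero (K := ℚ) (f := 1 - X ^ n) (by simp [hn])
  rwa [map_sub, map_one, map_pow] at h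

theorem ofPowerSeries_qp_succ (n : ℕ) : ι (qp (n + 1)) = ι (qp n) * (1 - ι X ^ (n + 1)) := by
  rw [qp_succ, map_mul, map_sub, map_one, map_pow]

theorem qbin_of_lt {n k : ℕ} (h : n < k) : qbin n k = 0 := if_neg (by omega)

theorem ofPowerSeries_qbin {n k : ℕ} (h : k ≤ n) :
    ι (qbin n k) = ι (qp n) / (ι (qp k) * ι (qp (n - k))) := by
  rw [qbin, if_pos h, map_mul, PowerSeries.mul_inv_rev, map_mul, ofPowerSeries_qp_inv,
    ofPowerSeries_qp_inv, div_eq_mul_inv, mul_inv, mul_comm (ι (qp (n - k)))⁻¹]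

theorem qbin_zero_right (n : ℕ) : qbin n 0 = 1 := by
  apply HahnSeries.ofPowerSeries_injective (Γ := ℤ)
  rw [ofPowerSeries_qbin n.zero_le, qp_zero, map_one, one_mul, Nat.sub_zero,
    div_self (ofPowerSeries_qp_ne_zero _)]

theorem qbin_self (n : ℕ) : qbin n n = 1 := by
  apply HahnSeries.ofPowerSeries_injective (Γ := ℤ)
  rw [ofPowerSeries_qbin le_rfl, Nat.sub_self, qp_zero, map_one, mul_one,
    div_self (ofPowerSeries_qp_ne_zero _)]

theorem qbin_succ_succ (n j : ℕ) :
    qbin (n + 1) (j + 1) = qbin n (j + 1) + X ^ (n - j) * qbin n j := by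
  obtain hnj | rfl | hjn := lt_trichotomy n j
  · simp [qbin_of_lt, hnj, hnj.trans (Nat.lt_succ_self j)]
  · simp [qbin_self, qbin_of_lt]
  obtain ⟨k, rfl⟩ := Nat.exists_eq_add_of_lt hjn
  apply HahnSeries.ofPowerSeries_injective (Γ := ℤ)
  rw [map_add, map_mul, ofPowerSeries_qbin (by omega), ofPowerSeries_qbin (by omega),
    ofPowerSeries_qbin (by omega), show j + k + 1 + 1 - (j + 1) = k + 1 by omega,
    show j + k + 1 - (j + 1) = k by omega, show j + k + 1 - j = k + 1 by omega,
    ofPowerSeries_qp_succ (j + k + 1), ofPowerSeries_qp_succ j, ofPowerSeries_qp_succ k, map_pow]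
  have := ofPowerSeries_qp_ne_zero
  have := one_sub_ofPowerSeries_X_pow_ne_zero (n := j + 1) (by omega)
  have := one_sub_ofPowerSeries_X_pow_ne_zero (n := k + 1) (by omega)
  field_simp
  ring

theorem qbin_add_eq_sum_antidiagonal (M N k : ℕ) :
    qbin (M + N) k = ∑ p ∈ antidiagonal k, X ^ (p.1 * (M - p.2)) * qbin N p.1 * qbin M p.2 := by
  induction N generalizing k with
  | zero =>
    rcases k with _ | k
    · simp [qbin_zero_right]
    · simp [Nat.sum_antidiagonal_succ, qbin_zero_right, qbin_of_lt]
  | succ N ih =>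
    rcases k with _ | k
    · simp [qbin_zero_right]
    have hterm : ∀ p ∈ antidiagonal k,
        X ^ ((p.1 + 1) * (M - p.2)) * qbin (N + 1) (p.1 + 1) * qbin M p.2
          = X ^ ((p.1 + 1) * (M - p.2)) * qbin N (p.1 + 1) * qbin M p.2
            + X ^ (M + N - k) * (X ^ (p.1 * (M - p.2)) * qbin N p.1 * qbin M p.2) := by
      intro p hp
      rw [HasAntidiagonal.mem_antidiagonal] at hp
      rw [qbin_succ_succ]
      rcases lt_or_ge N p.1 with hN | hN
      · simp [qbin_of_lt hN, qbin_of_lt (hN.trans (Nat.lt_succ_self _))]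
      rcases lt_or_ge M p.2 with hM | hM
      · simp [qbin_of_lt hM]
      rw [show M + N - k = (M - p.2) + (N - p.1) by omega]
      ring
    rw [← add_assoc, qbin_succ_succ, ih, ih, Nat.sum_antidiagonal_succ, Nat.sum_antidiagonal_succ,
      sum_congr rfl hterm, sum_add_distrib, mul_sum]
    simp only [qbin_zero_right]
    ring

theorem PowerSeries.coeff_eq_of_smodEq {R : Type*} [CommRing R] {f g : R⟦X⟧} {s n : ℕ}
    (h : f ≡ g [SMOD Ideal.span {X ^ s}]) (hn : n < s) : coeff n f = coeff n g := by
  rw [SModEq.sub_mem, Ideal.mem_span_singleton, X_pow_dvd_iff] at h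
  simpa [sub_eq_zero] using h n hn

theorem PowerSeries.inv_smodEq_inv {K : Type*} [Field K] {I : Ideal K⟦X⟧} {f g : K⟦X⟧}
    (hf : constantCoeff f ≠ 0) (hg : constantCoeff g ≠ 0) (h : f ≡ g [SMOD I]) :
    f⁻¹ ≡ g⁻¹ [SMOD I] :=
  calc f⁻¹ = f⁻¹ * g * g⁻¹ := by rw [mul_assoc, PowerSeries.mul_inv_cancel _ hg, mul_one]
    _ ≡ f⁻¹ * f * g⁻¹ [SMOD I] := (SModEq.rfl.mul h.symm).mul SModEq.rfl
    _ = g⁻¹ := by rw [PowerSeries.inv_mul_cancel _ hf, one_mul]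

theorem SModEq.mul_left_span_singleton {R : Type*} [CommRing R] {c d f g : R}
    (h : f ≡ g [SMOD Ideal.span {d}]) : c * f ≡ c * g [SMOD Ideal.span {c * d}] := by
  rw [SModEq.sub_mem, Ideal.mem_span_singleton] at h ⊢
  rw [← mul_sub]
  exact mul_dvd_mul_left c h

theorem qp_add_smodEq (k l : ℕ) : qp (k + l) ≡ qp k [SMOD Ideal.span {X ^ (k + 1)}] :=
  calc qp (k + l) = qp k * ∏ i ∈ range l, (1 - X ^ (k + i + 1)) := qp_add k l
    _ ≡ qp k * ∏ _ ∈ range l, 1 [SMOD Ideal.span {X ^ (k + 1)}] := by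
      refine SModEq.rfl.mul (SModEq.prod fun i _ => ?_)
      rw [SModEq.sub_mem, Ideal.mem_span_singleton, sub_sub_cancel_left, dvd_neg]
      exact pow_dvd_pow X (by omega)
    _ = qp k := by rw [prod_const_one, mul_one]

theorem constantCoeff_qpInf : constantCoeff qpInf = 1 := by
  rw [qpInf, ← coeff_zero_eq_constantCoeff_apply, coeff_mk, coeff_zero_eq_constantCoeff_apply,
    constantCoeff_qp]

theorem qpInf_smodEq (n : ℕ) : qpInf ≡ qp n [SMOD Ideal.span {X ^ (n + 1)}] := by
  rw [SModEq.sub_mem, Ideal.mem_span_singleton, X_pow_dvd_iff]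
  intro k hk
  have h := coeff_eq_of_smodEq (qp_add_smodEq k (n - k)) (Nat.lt_succ_self k)
  rw [Nat.add_sub_cancel' (by omega)] at h
  rw [map_sub, qpInf, coeff_mk, h, sub_self]

theorem qp_add_mul_inv_smodEq (k l : ℕ) :
    qp (k + l) * (qp k * qp l)⁻¹ ≡ (qp l)⁻¹ [SMOD Ideal.span {X ^ (k + 1)}] :=
  calc qp (k + l) * (qp k * qp l)⁻¹
        ≡ qp k * (qp k * qp l)⁻¹ [SMOD Ideal.span {X ^ (k + 1)}] :=
        (qp_add_smodEq k l).mul SModEq.rfl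
    _ = (qp l)⁻¹ := by
      rw [PowerSeries.mul_inv_rev, mul_left_comm,
        PowerSeries.mul_inv_cancel _ (by simp [constantCoeff_qp]), mul_one]

theorem qbin_add_left_smodEq (k l : ℕ) :
    qbin (k + l) k ≡ (qp l)⁻¹ [SMOD Ideal.span {X ^ (k + 1)}] := by
  rw [qbin, if_pos (by omega), Nat.add_sub_cancel_left]
  exact qp_add_mul_inv_smodEq k l

theorem qbin_add_right_smodEq (k l : ℕ) :
    qbin (k + l) l ≡ (qp l)⁻¹ [SMOD Ideal.span {X ^ (k + 1)}] := by
  rw [qbin, if_pos (by omega), Nat.add_sub_cancel, mul_comm (qp l)]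
  exact qp_add_mul_inv_smodEq k l

noncomputable def durfeeTerm (r e : ℕ) : ℚ⟦X⟧ :=
  X ^ (e * (e + r)) * (qp e * qp (e + r))⁻¹

theorem le_mul_add_self (e r : ℕ) : e ≤ e * (e + r) :=
  (Nat.le_mul_self e).trans (Nat.mul_le_mul_left e (Nat.le_add_right e r))

theorem X_pow_dvd_durfeeTerm (r e : ℕ) : X ^ e ∣ durfeeTerm r e :=
  (pow_dvd_pow X (le_mul_add_self e r)).mul_right _

theorem durfeeTerm_smodEq (r : ℕ) {n : ℕ} {p : ℕ × ℕ} (hp : p ∈ antidiagonal n) :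
    X ^ (p.1 * (n + r - p.2)) * qbin n p.1 * qbin (n + r) p.2
      ≡ durfeeTerm r p.1 [SMOD Ideal.span {X ^ (n + 1)}] := by
  rw [HasAntidiagonal.mem_antidiagonal] at hp
  subst hp
  rw [show p.1 + p.2 + r - p.2 = p.1 + r by omega, show p.1 + p.2 + r = p.2 + (p.1 + r) by ring,
    add_comm p.1 p.2, mul_assoc, durfeeTerm, PowerSeries.mul_inv_rev, mul_comm (qp (p.1 + r))⁻¹]
  refine (SModEq.mul_left_span_singleton
    ((qbin_add_right_smodEq p.2 p.1).mul (qbin_add_left_smodEq p.2 (p.1 + r)))).mono ?_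
  rw [Ideal.span_singleton_le_span_singleton, ← pow_add]
  have := le_mul_add_self p.1 r
  exact pow_dvd_pow X (by omega)

theorem qpInf_inv_eq_seriesSum_durfeeTerm (r : ℕ) : qpInf⁻¹ = seriesSum (durfeeTerm r) := by
  ext n
  rw [seriesSum, coeff_mk]
  refine coeff_eq_of_smodEq ?_ (Nat.lt_succ_self n)
  calc qpInf⁻¹ ≡ (qp (n + r))⁻¹ [SMOD Ideal.span {X ^ (n + 1)}] :=
        inv_smodEq_inv (by simp [constantCoeff_qpInf]) (by simp [constantCoeff_qp])
          ((qpInf_smodEq n).trans (qp_add_smodEq n r).symm)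
    _ ≡ qbin (n + r + n) n [SMOD Ideal.span {X ^ (n + 1)}] := by
      rw [add_comm (n + r)]; exact (qbin_add_left_smodEq n (n + r)).symm
    _ = ∑ p ∈ antidiagonal n, X ^ (p.1 * (n + r - p.2)) * qbin n p.1 * qbin (n + r) p.2 :=
      qbin_add_eq_sum_antidiagonal (n + r) n n
    _ ≡ ∑ p ∈ antidiagonal n, durfeeTerm r p.1 [SMOD Ideal.span {X ^ (n + 1)}] :=
      SModEq.sum fun p hp => by exact durfeeTerm_smodEq r hp
    _ = ∑ e ∈ range (n + 1), durfeeTerm r e :=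
      Nat.sum_antidiagonal_eq_sum_range_succ (fun i _ => durfeeTerm r i) n

theorem coeff_seriesSum_of_lt {f : ℕ → ℚ⟦X⟧} (hf : ∀ d, X ^ d ∣ f d) {n N : ℕ}
    (hn : n < N) :
    coeff n (seriesSum f) = coeff n (∑ d ∈ range N, f d) := by
  have htail : ∑ d ∈ Ico (n + 1) N, coeff n (f d) = 0 :=
    sum_eq_zero fun d hd => X_pow_dvd_iff.mp (hf d) n (mem_Ico.mp hd).1
  rw [seriesSum, coeff_mk, ← sum_range_add_sum_Ico _ (show n + 1 ≤ N from hn), map_add,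
    map_sum (coeff n) f (Ico (n + 1) N), htail, add_zero]

theorem seriesSum_add (f g : ℕ → ℚ⟦X⟧) :
    seriesSum (fun d => f d + g d) = seriesSum f + seriesSum g := by
  ext n
  simp [seriesSum, sum_add_distrib]

theorem seriesSum_mul_left (c : ℚ⟦X⟧) {f : ℕ → ℚ⟦X⟧} (hf : ∀ d, X ^ d ∣ f d) :
    seriesSum (fun d => c * f d) = c * seriesSum f := by
  ext n
  rw [seriesSum, coeff_mk, ← mul_sum, coeff_mul, coeff_mul]
  refine sum_congr rfl fun p hp => ?_
  rw [coeff_seriesSum_of_lt hf (N := n + 1) (Nat.antidiagonal.snd_lt hp)]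

theorem seriesSum_eq_sum_range_add {f : ℕ → ℚ⟦X⟧} (hf : ∀ d, X ^ d ∣ f d) (k : ℕ) :
    seriesSum f = ∑ d ∈ range k, f d + seriesSum (fun d => f (d + k)) := by
  ext n
  rw [map_add, coeff_seriesSum_of_lt hf (N := k + (n + 1)) (by omega), seriesSum, coeff_mk,
    ← map_add, sum_range_add]
  simp only [add_comm k]

noncomputable def truncPentTerm (m D : ℕ) : ℚ⟦X⟧ :=
  X ^ (D ^ 2 + D + m.choose 2) * (qp (2 * D))⁻¹ * (1 - X ^ m) * (1 - X ^ D)⁻¹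
    * qbin (2 * D) (D + m)

theorem truncPentTerm_of_lt {m D : ℕ} (h : D < m) : truncPentTerm m D = 0 := by
  rw [truncPentTerm, qbin_of_lt (by omega), mul_zero]

theorem X_pow_dvd_truncPentTerm (m D : ℕ) : X ^ D ∣ truncPentTerm m D := by
  simp only [truncPentTerm, mul_assoc]
  exact (pow_dvd_pow X (by nlinarith)).mul_right _

theorem ofPowerSeries_truncPentTerm {m : ℕ} (hm : m ≠ 0) (e : ℕ) :
    ι (truncPentTerm m (e + m)) = ι X ^ ((e + m) ^ 2 + (e + m) + m.choose 2) * (1 - ι X ^ m)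
      / ((1 - ι X ^ (e + m)) * ι (qp (e + m + m)) * ι (qp e)) := by
  have := ofPowerSeries_qp_ne_zero (2 * (e + m))
  rw [truncPentTerm, map_mul, map_mul, map_mul, map_mul, map_pow, ofPowerSeries_qp_inv, map_sub,
    map_one, map_pow, ofPowerSeries_one_sub_X_pow_inv (by omega), ofPowerSeries_qbin (by omega),
    show 2 * (e + m) - (e + m + m) = e by omega]
  field_simp

theorem ofPowerSeries_durfeeTerm (r e : ℕ) :
    ι (durfeeTerm r e) = ι X ^ (e * (e + r)) / (ι (qp e) * ι (qp (e + r))) := by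
  rw [durfeeTerm, map_mul, map_pow, PowerSeries.mul_inv_rev, map_mul, ofPowerSeries_qp_inv,
    ofPowerSeries_qp_inv, div_eq_mul_inv, mul_inv, mul_comm (ι (qp e))⁻¹]

theorem pentagonal_eq (m : ℕ) : m * (3 * m + 1) / 2 = m * m + m + m.choose 2 := by
  have h : 2 * m.choose 2 + m = m * m := by
    induction m with
    | zero => rfl
    | succ m ih => rw [Nat.choose_succ_succ, Nat.choose_one_right]; ring_nf; ring_nf at ih; omega
  refine Nat.div_eq_of_eq_mul_left two_pos ?_
  ring_nf; ring_nf at h; omega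

theorem truncPentTerm_add_truncPentTerm_succ {m : ℕ} (hm : m ≠ 0) (e : ℕ) :
    truncPentTerm m (e + m) + truncPentTerm (m + 1) (e + m)
      = X ^ (m * (3 * m + 1) / 2) * (1 - X ^ (2 * m + 1)) * durfeeTerm (2 * m + 1) e := by
  apply HahnSeries.ofPowerSeries_injective (Γ := ℤ)
  have := ofPowerSeries_qp_ne_zero
  rw [map_add, map_mul, map_mul, map_pow, ofPowerSeries_truncPentTerm hm, ofPowerSeries_durfeeTerm,
    pentagonal_eq, show e + (2 * m + 1) = e + m + m + 1 by ring, ofPowerSeries_qp_succ (e + m + m),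
    map_sub, map_one, map_pow]
  rcases e with _ | e
  · have := one_sub_ofPowerSeries_X_pow_ne_zero (n := 0 + m) (by omega)
    have := one_sub_ofPowerSeries_X_pow_ne_zero (n := 0 + m + m + 1) (by omega)
    rw [truncPentTerm_of_lt (by omega), map_zero, add_zero]
    field_simp
    ring
  · rw [show e + 1 + m = e + (m + 1) by ring, ofPowerSeries_truncPentTerm (by omega),
      show e + (m + 1) + (m + 1) = e + (m + 1) + m + 1 by ring,
      ofPowerSeries_qp_succ (e + (m + 1) + m), ofPowerSeries_qp_succ e, Nat.choose_succ_succ,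
      Nat.choose_one_right]
    have := one_sub_ofPowerSeries_X_pow_ne_zero (n := e + 1) (by omega)
    have := one_sub_ofPowerSeries_X_pow_ne_zero (n := e + (m + 1)) (by omega)
    have := one_sub_ofPowerSeries_X_pow_ne_zero (n := e + (m + 1) + m + 1) (by omega)
    field_simp
    ring

theorem seriesSum_truncPentTerm_add_succ {m : ℕ} (hm : m ≠ 0) :
    seriesSum (fun d => truncPentTerm m (d + 1))
        + seriesSum (fun d => truncPentTerm (m + 1) (d + 1))
      = X ^ (m * (3 * m + 1) / 2) * (1 - X ^ (2 * m + 1)) * qpInf⁻¹ := by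
  have hdvd (d : ℕ) : X ^ d ∣ truncPentTerm m (d + 1) + truncPentTerm (m + 1) (d + 1) :=
    dvd_add ((pow_dvd_pow X d.le_succ).trans (X_pow_dvd_truncPentTerm _ _))
      ((pow_dvd_pow X d.le_succ).trans (X_pow_dvd_truncPentTerm _ _))
  have hlow : ∀ d ∈ range (m - 1),
      truncPentTerm m (d + 1) + truncPentTerm (m + 1) (d + 1) = 0 := fun d hd => by
    have := mem_range.mp hd
    rw [truncPentTerm_of_lt (by omega), truncPentTerm_of_lt (by omega), add_zero]
  have hshift : (fun e => truncPentTerm m (e + (m - 1) + 1)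
        + truncPentTerm (m + 1) (e + (m - 1) + 1))
      = fun e => X ^ (m * (3 * m + 1) / 2) * (1 - X ^ (2 * m + 1)) * durfeeTerm (2 * m + 1) e := by
    funext e
    rw [show e + (m - 1) + 1 = e + m by omega, truncPentTerm_add_truncPentTerm_succ hm]
  rw [← seriesSum_add, seriesSum_eq_sum_range_add hdvd (m - 1), sum_eq_zero hlow, zero_add,
    hshift, seriesSum_mul_left _ (X_pow_dvd_durfeeTerm _), ← qpInf_inv_eq_seriesSum_durfeeTerm]

theorem one_sub_X_mul_qpInf_inv :
    (1 - X) * qpInf⁻¹ = 1 + seriesSum (fun d => truncPentTerm 1 (d + 1)) := by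
  have hdvd (d : ℕ) : X ^ d ∣ (1 - X) * durfeeTerm 1 d := (X_pow_dvd_durfeeTerm 1 d).mul_left _
  rw [qpInf_inv_eq_seriesSum_durfeeTerm 1, ← seriesSum_mul_left _ (X_pow_dvd_durfeeTerm 1),
    seriesSum_eq_sum_range_add hdvd 1, sum_range_one]
  congr 1
  · rw [durfeeTerm, zero_mul, pow_zero, one_mul, qp_zero, one_mul, zero_add, qp_one]
    exact PowerSeries.mul_inv_cancel _ (by simp)
  · congr 1
    funext d
    apply HahnSeries.ofPowerSeries_injective (Γ := ℤ)
    have := ofPowerSeries_qp_ne_zero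
    have := one_sub_ofPowerSeries_X_pow_ne_zero (n := d + 1) (by omega)
    rw [ofPowerSeries_truncPentTerm one_ne_zero, Nat.choose_eq_zero_of_lt one_lt_two, add_zero,
      map_mul, ofPowerSeries_durfeeTerm, map_sub, map_one, ofPowerSeries_qp_succ d]
    field_simp
    ring

/-- For `m ≥ 1`:
`(1/(q;q)_∞) Σ_{l=0}^{m-1} (-1)^l q^{l(3l+1)/2}(1-q^{2l+1})
  = 1 + (-1)^{m-1} Σ_{d=1}^∞ q^{d²+d+C(m,2)}/(q;q)_{2d} · (1-q^m)/(1-q^d) · qbinom(2d,d+m)`. -/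
theorem stmt_9 (m : ℕ) (hm : 1 ≤ m) :
    qpInf⁻¹ * ∑ l ∈ Finset.range m,
        (-1 : PowerSeries ℚ) ^ l * PowerSeries.X ^ (l * (3 * l + 1) / 2)
          * (1 - PowerSeries.X ^ (2 * l + 1))
      = 1 + (-1 : PowerSeries ℚ) ^ (m - 1) *
          seriesSum (fun d =>
            PowerSeries.X ^ ((d + 1) ^ 2 + (d + 1) + m.choose 2) * (qp (2 * (d + 1)))⁻¹
              * (1 - PowerSeries.X ^ m) * (1 - PowerSeries.X ^ (d + 1))⁻¹
              * qbin (2 * (d + 1)) ((d + 1) + m)) := by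
  change _ = 1 + (-1) ^ (m - 1) * seriesSum (fun d => truncPentTerm m (d + 1))
  induction m, hm using Nat.le_induction with
  | base => simpa [mul_comm] using one_sub_X_mul_qpInf_inv
  | succ m hm ih =>
    have hstep := seriesSum_truncPentTerm_add_succ (m := m) (by omega)
    obtain ⟨k, rfl⟩ := Nat.exists_eq_add_of_le' hm
    rw [sum_range_succ, mul_add, ih]
    simp only [Nat.add_sub_cancel]
    linear_combination (-1) ^ k * hstep
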